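/- arXiv:dg-ga/9510005 — 2 statements merged into one kernel-verified Lean document; each statement's English description precedes it below -/
import Mathlib

section
/- The defining equations of the space of oriented triangles have everywhere-surjective differential, so by the implicit function theorem the solution set is a smooth variety: let V = {(q₁, q₂, q₃) ∈ (ℝ³)³ : m₁q₁ + m₂q₂ + m₃q₃ = 0} for fixed masses m₁, m₂, m₃ > 0, and define F : V × ℝ³ → ℝ³ by F(q, n) = (⟨n, q₁⟩, ⟨n, q₂⟩, ‖n‖²). Then at every point (q, n) ∈ V × ℝ³ with n ≠ 0, the Fréchet derivative of F is a surjective linear map onto ℝ³. -/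
noncomputable section

/-- `ℝ³` with the Euclidean norm. -/
abbrev R3 : Type := EuclideanSpace ℝ (Fin 3)

/-- The center-of-mass linear map `(q₁, q₂, q₃) ↦ m₁q₁ + m₂q₂ + m₃q₃`. -/
def comMap (m₁ m₂ m₃ : ℝ) : (R3 × R3 × R3) →ₗ[ℝ] R3 :=
  m₁ • LinearMap.fst ℝ R3 (R3 × R3)
    + m₂ • (LinearMap.fst ℝ R3 R3).comp (LinearMap.snd ℝ R3 (R3 × R3))
    + m₃ • (LinearMap.snd ℝ R3 R3).comp (LinearMap.snd ℝ R3 (R3 × R3))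

/-- The center-of-mass-zero three-body configuration space
`V = {(q₁, q₂, q₃) : m₁q₁ + m₂q₂ + m₃q₃ = 0}`. -/
def comZero (m₁ m₂ m₃ : ℝ) : Submodule ℝ (R3 × R3 × R3) :=
  LinearMap.ker (comMap m₁ m₂ m₃)

/-- The defining map `F(q, n) = (⟨n, q₁⟩, ⟨n, q₂⟩, ‖n‖²)` of the space of oriented
triangles, on `V × ℝ³`. -/
def defMap (m₁ m₂ m₃ : ℝ) (p : comZero m₁ m₂ m₃ × R3) : ℝ × ℝ × ℝ :=
  ((inner ℝ p.2 (p.1 : R3 × R3 × R3).1 : ℝ),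
    (inner ℝ p.2 (p.1 : R3 × R3 × R3).2.1 : ℝ),
    ‖p.2‖ ^ 2)

/-! The derivative of `F` at `(q, n)` is `(v, u) ↦ (⟪n, v₁⟫ + ⟪u, q₁⟫, ⟪n, v₂⟫ + ⟪u, q₂⟫, 2⟪n, u⟫)`,
which is triangular: a multiple `u` of `n` reaches any third coordinate, and then a variation
`v = (αn, βn, γn)` inside `V` corrects the first two, `γ` being forced by the center-of-mass
constraint, which is solvable for it because `m₃ ≠ 0`. -/

open scoped RealInnerProductSpace

section InnerProduct

variable {G E : Type*} [NormedAddCommGroup G] [NormedSpace ℝ G]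
  [NormedAddCommGroup E] [InnerProductSpace ℝ E]

theorem ContinuousLinearMap.differentiableAt_inner (N A : G →L[ℝ] E) (x : G) :
    DifferentiableAt ℝ (fun p => ⟪N p, A p⟫) x :=
  N.differentiableAt.inner ℝ A.differentiableAt

theorem ContinuousLinearMap.fderiv_inner_apply (N A : G →L[ℝ] E) (x v : G) :
    fderiv ℝ (fun p => ⟪N p, A p⟫) x v = ⟪N x, A v⟫ + ⟪N v, A x⟫ := by
  rw [_root_.fderiv_inner_apply ℝ N.differentiableAt A.differentiableAt, N.fderiv, A.fderiv]

theorem inner_div_norm_sq_smul_self {n : E} (hn : n ≠ 0) (a : ℝ) :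
    ⟪n, (a / ‖n‖ ^ 2) • n⟫ = a := by
  rw [real_inner_smul_right, real_inner_self_eq_norm_sq]
  field_simp [norm_ne_zero_iff.mpr hn]

end InnerProduct

namespace comZero

variable {m₁ m₂ m₃ : ℝ}

theorem triple_smul_mem {α β γ : ℝ} (h : m₁ * α + m₂ * β + m₃ * γ = 0) (n : R3) :
    (α • n, β • n, γ • n) ∈ comZero m₁ m₂ m₃ := by
  simp [comZero, comMap, smul_smul, ← add_smul, h]

theorem exists_mem_inner_eq (hm₃ : m₃ ≠ 0) {n : R3} (hn : n ≠ 0) (a b : ℝ) :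
    ∃ v ∈ comZero m₁ m₂ m₃, ⟪n, v.1⟫ = a ∧ ⟪n, v.2.1⟫ = b := by
  refine ⟨_, triple_smul_mem (γ := -(m₁ * (a / ‖n‖ ^ 2) + m₂ * (b / ‖n‖ ^ 2)) / m₃) ?_ n,
    inner_div_norm_sq_smul_self hn a, inner_div_norm_sq_smul_self hn b⟩
  rw [mul_div_cancel₀ _ hm₃]
  ring

end comZero

theorem fderiv_defMap_apply (m₁ m₂ m₃ : ℝ) (q v : comZero m₁ m₂ m₃) (n u : R3) :
    fderiv ℝ (defMap m₁ m₂ m₃) (q, n) (v, u) =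
      (⟪n, (v : R3 × R3 × R3).1⟫ + ⟪u, (q : R3 × R3 × R3).1⟫,
        ⟪n, (v : R3 × R3 × R3).2.1⟫ + ⟪u, (q : R3 × R3 × R3).2.1⟫, 2 * ⟪n, u⟫) := by
  let P : comZero m₁ m₂ m₃ × R3 →L[ℝ] R3 × R3 × R3 :=
    (comZero m₁ m₂ m₃).subtypeL.comp (.fst ℝ _ R3)
  let N : comZero m₁ m₂ m₃ × R3 →L[ℝ] R3 := .snd ℝ _ R3
  let Q₁ := (ContinuousLinearMap.fst ℝ R3 (R3 × R3)).comp P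
  let Q₂ := (ContinuousLinearMap.fst ℝ R3 R3).comp ((ContinuousLinearMap.snd ℝ R3 (R3 × R3)).comp P)
  have h : defMap m₁ m₂ m₃ = fun p => (⟪N p, Q₁ p⟫, ⟪N p, Q₂ p⟫, ⟪N p, N p⟫) := by
    funext p
    simp only [defMap, real_inner_self_eq_norm_sq]
    rfl
  rw [h, DifferentiableAt.fderiv_prodMk (N.differentiableAt_inner Q₁ _)
      ((N.differentiableAt_inner Q₂ _).prodMk (N.differentiableAt_inner N _)),
    DifferentiableAt.fderiv_prodMk (N.differentiableAt_inner Q₂ _) (N.differentiableAt_inner N _)]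
  simp only [ContinuousLinearMap.prod_apply, ContinuousLinearMap.fderiv_inner_apply]
  rw [two_mul]
  nth_rw 2 [← real_inner_comm n u]
  rfl

theorem oriented_triangle_equations_submersion_general
    (m₁ m₂ m₃ : ℝ) (hm₃ : 0 < m₃)
    (q : comZero m₁ m₂ m₃) (n : R3) (hn : n ≠ 0) :
    Function.Surjective (fderiv ℝ (defMap m₁ m₂ m₃) (q, n)) := by
  rintro ⟨a, b, c⟩
  set u : R3 := (c / 2 / ‖n‖ ^ 2) • n
  obtain ⟨v, hv, hv₁, hv₂⟩ := comZero.exists_mem_inner_eq (m₁ := m₁) (m₂ := m₂) hm₃.ne' hn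
    (a - ⟪u, (q : R3 × R3 × R3).1⟫) (b - ⟪u, (q : R3 × R3 × R3).2.1⟫)
  refine ⟨(⟨v, hv⟩, u), ?_⟩
  rw [fderiv_defMap_apply, hv₁, hv₂, inner_div_norm_sq_smul_self hn, sub_add_cancel, sub_add_cancel,
    mul_div_cancel₀ c two_ne_zero]

/-- The defining equations of the space of oriented triangles have everywhere-surjective
differential: at every point `(q, n) ∈ V × ℝ³` with `n ≠ 0`, the Fréchet derivative of
`F(q, n) = (⟨n, q₁⟩, ⟨n, q₂⟩, ‖n‖²)` is a surjective linear map onto `ℝ³`. -/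
theorem oriented_triangle_equations_submersion
    (m₁ m₂ m₃ : ℝ) (hm₁ : 0 < m₁) (hm₂ : 0 < m₂) (hm₃ : 0 < m₃)
    (q : comZero m₁ m₂ m₃) (n : R3) (hn : n ≠ 0) :
    Function.Surjective (fderiv ℝ (defMap m₁ m₂ m₃) (q, n)) :=
  oriented_triangle_equations_submersion_general m₁ m₂ m₃ hm₃ q n hn
end
end

section
/- The height coordinate on the shape sphere is proportional to the oriented area of the triangle: let m₁, m₂, m₃ > 0 and let q₁, q₂, q₃ ∈ ℂ satisfy m₁q₁ + m₂q₂ + m₃q₃ = 0. Let ζ₁ = √μ₁ (q₁ − q₃) and ζ₂ = √μ₂ (q₂ − (m₁q₁ + m₃q₃)/(m₁ + m₃)) be the normalized Jacobi coordinates, where 1/μ₁ = 1/m₁ + 1/m₃ and 1/μ₂ = 1/(m₁ + m₃) + 1/m₂. Then Im(conj(ζ₁) · ζ₂) = 2 √(m₁m₂m₃/(m₁ + m₂ + m₃)) · Δ, where Δ = ½ Im(conj(q₂ − q₁) · (q₃ − q₁)) is the oriented area of the triangle (q₁, q₂, q₃). -/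
noncomputable section

/-- The height coordinate on the shape sphere is proportional to the oriented area of the
triangle: in normalized Jacobi coordinates `ζ₁ = √μ₁ (q₁ − q₃)`,
`ζ₂ = √μ₂ (q₂ − (m₁q₁ + m₃q₃)/(m₁ + m₃))` of a centered configuration,
`Im(conj(ζ₁) ζ₂) = 2 √(m₁m₂m₃/(m₁+m₂+m₃)) Δ`, where
`Δ = ½ Im(conj(q₂ − q₁)(q₃ − q₁))` is the oriented area. -/
theorem height_proportional_to_area
    (m₁ m₂ m₃ : ℝ) (hm₁ : 0 < m₁) (hm₂ : 0 < m₂) (hm₃ : 0 < m₃)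
    (μ₁ μ₂ : ℝ)
    (hμ₁ : 1 / μ₁ = 1 / m₁ + 1 / m₃)
    (hμ₂ : 1 / μ₂ = 1 / (m₁ + m₃) + 1 / m₂)
    (q₁ q₂ q₃ : ℂ)
    (hcom : (m₁ : ℂ) * q₁ + (m₂ : ℂ) * q₂ + (m₃ : ℂ) * q₃ = 0)
    (ζ₁ ζ₂ : ℂ)
    (hζ₁ : ζ₁ = (Real.sqrt μ₁ : ℂ) * (q₁ - q₃))
    (hζ₂ : ζ₂ = (Real.sqrt μ₂ : ℂ) *
      (q₂ - ((m₁ : ℂ) * q₁ + (m₃ : ℂ) * q₃) / ((m₁ : ℂ) + (m₃ : ℂ))))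
    (Δ : ℝ)
    (hΔ : Δ = (1 / 2) * (starRingEnd ℂ (q₂ - q₁) * (q₃ - q₁)).im) :
    (starRingEnd ℂ ζ₁ * ζ₂).im =
      2 * Real.sqrt (m₁ * m₂ * m₃ / (m₁ + m₂ + m₃)) * Δ := by
  have h13 : (0:ℝ) < m₁ + m₃ := by linarith
  have h123 : (0:ℝ) < m₁ + m₂ + m₃ := by linarith
  have hμ₁' : μ₁ = m₁ * m₃ / (m₁ + m₃) := by
    have hμ₁ne : μ₁ ≠ 0 := by
      intro h; rw [h] at hμ₁; simp at hμ₁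
      have : 0 < m₁⁻¹ + m₃⁻¹ := by positivity
      linarith
    field_simp at hμ₁ ⊢
    linarith [hμ₁]
  have hμ₂' : μ₂ = (m₁ + m₃) * m₂ / (m₁ + m₂ + m₃) := by
    have hμ₂ne : μ₂ ≠ 0 := by
      intro h; rw [h] at hμ₂; simp at hμ₂
      have : 0 < (m₁ + m₃)⁻¹ + m₂⁻¹ := by positivity
      linarith
    field_simp at hμ₂ ⊢
    linarith [hμ₂]
  have hμ₁pos : 0 ≤ μ₁ := by rw [hμ₁']; positivity
  have hmul : μ₁ * μ₂ = m₁ * m₂ * m₃ / (m₁ + m₂ + m₃) := by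
    rw [hμ₁', hμ₂']; field_simp
  have hsqrt : Real.sqrt μ₁ * Real.sqrt μ₂ =
      Real.sqrt (m₁ * m₂ * m₃ / (m₁ + m₂ + m₃)) := by
    rw [← Real.sqrt_mul hμ₁pos, hmul]
  have h13C : ((m₁ : ℂ) + (m₃ : ℂ)) ≠ 0 := by
    have : ((m₁ + m₃ : ℝ) : ℂ) ≠ 0 := by
      exact_mod_cast Complex.ofReal_ne_zero.mpr (ne_of_gt h13)
    push_cast at this; exact this
  have hc : q₂ - ((m₁ : ℂ) * q₁ + (m₃ : ℂ) * q₃) / ((m₁ : ℂ) + (m₃ : ℂ)) =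
      (q₂ - q₁) + ((m₃ : ℝ) / (m₁ + m₃) : ℝ) * (q₁ - q₃) := by
    push_cast
    field_simp
    ring
  have him : ∀ (r : ℝ) (z : ℂ), ((r : ℂ) * z).im = r * z.im := by
    intro r z; simp [Complex.mul_im]
  have hre : ∀ (r : ℝ) (a b : ℂ),
      (starRingEnd ℂ a * (b + (r : ℂ) * a)).im = (starRingEnd ℂ a * b).im := by
    intro r a b
    simp [mul_add, Complex.mul_im, Complex.conj_re, Complex.conj_im,
      Complex.mul_re, Complex.mul_im, Complex.ofReal_re, Complex.ofReal_im]
    ring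
  have key : (starRingEnd ℂ (q₁ - q₃) *
      (q₂ - ((m₁ : ℂ) * q₁ + (m₃ : ℂ) * q₃) / ((m₁ : ℂ) + (m₃ : ℂ)))).im =
      (starRingEnd ℂ (q₂ - q₁) * (q₃ - q₁)).im := by
    rw [hc, hre]
    simp [Complex.mul_im, Complex.sub_re, Complex.sub_im, Complex.conj_re,
      Complex.conj_im]
    ring
  rw [hζ₁, hζ₂, hΔ]
  rw [map_mul, Complex.conj_ofReal]
  have : ((Real.sqrt μ₁ : ℂ)) * starRingEnd ℂ (q₁ - q₃) *
      ((Real.sqrt μ₂ : ℂ) * (q₂ - ((m₁ : ℂ) * q₁ + (m₃ : ℂ) * q₃) / ((m₁ : ℂ) + (m₃ : ℂ)))) =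
      ((Real.sqrt μ₁ * Real.sqrt μ₂ : ℝ) : ℂ) *
      (starRingEnd ℂ (q₁ - q₃) *
        (q₂ - ((m₁ : ℂ) * q₁ + (m₃ : ℂ) * q₃) / ((m₁ : ℂ) + (m₃ : ℂ)))) := by
    push_cast; ring
  rw [this, him, key, hsqrt]
  ring
end
end
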